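/- Every separable density matrix on ℂ^M ⊗ ℂ^N can be written as a convex combination of at most M²N² pure product states: ρ = Σ_{i=1}^{M²N²} p_i (|α_i⟩⟨α_i| ⊗ |β_i⟩⟨β_i|) with p_i ≥ 0, Σ_i p_i = 1, unit vectors α_i ∈ ℂ^M and β_i ∈ ℂ^N. -/

import Mathlib

/-!
Diagonalising each factor of a separable state shows that `ρ` lies in the convex hull of the pure
product states `|α⟩⟨α| ⊗ |β⟩⟨β|`. These are Hermitian of trace one, so all their differences lie in
the real space of traceless Hermitian matrices, which `X ↦ Re X + Im X` embeds injectively into the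
traceless real `n × n` matrices (`n = MN`); its dimension is therefore less than `n²`. By
Carathéodory's theorem `ρ` is a convex combination of affinely independent pure product states,
and affine independence inside a translate of that space allows at most `n²` of them; padding with
zero weights gives exactly `M²N²` terms.
-/

open Matrix
open scoped Kronecker ComplexOrder

noncomputable section

/-- A density matrix: positive semidefinite with trace 1. -/
def IsDensityMatrix {n : Type*} [Fintype n] (ρ : Matrix n n ℂ) : Prop :=
  ρ.PosSemidef ∧ ρ.trace = 1

/-- Separability: finite convex combination of Kronecker products of density matrices. -/
def IsSeparableState {M N : ℕ} (ρ : Matrix (Fin M × Fin N) (Fin M × Fin N) ℂ) : Prop :=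
  ∃ (k : ℕ) (p : Fin k → ℝ)
    (σ : Fin k → Matrix (Fin M) (Fin M) ℂ)
    (τ : Fin k → Matrix (Fin N) (Fin N) ℂ),
    (∀ i, 0 ≤ p i) ∧ (∑ i, p i = 1) ∧
    (∀ i, IsDensityMatrix (σ i)) ∧ (∀ i, IsDensityMatrix (τ i)) ∧
    ρ = ∑ i, (p i : ℂ) • (σ i ⊗ₖ τ i)

/-- The pure state |v⟩⟨v| associated with a vector v, i.e. the rank-one matrix v vᴴ. -/
def pureState {n : Type*} (v : n → ℂ) : Matrix n n ℂ :=
  vecMulVec v (star v)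

open Module

theorem LinearMap.mem_convexHull_image2 {𝕜 E F G : Type*} [CommSemiring 𝕜] [PartialOrder 𝕜]
    [AddCommMonoid E] [AddCommMonoid F] [AddCommMonoid G] [Module 𝕜 E] [Module 𝕜 F] [Module 𝕜 G]
    (f : E →ₗ[𝕜] F →ₗ[𝕜] G) {s : Set E} {t : Set F} {x : E} {y : F}
    (hx : x ∈ convexHull 𝕜 s) (hy : y ∈ convexHull 𝕜 t) :
    f x y ∈ convexHull 𝕜 (Set.image2 (fun a b => f a b) s t) := by
  have hs : s ⊆ f.flip y ⁻¹' convexHull 𝕜 (Set.image2 (fun a b => f a b) s t) := by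
    intro a ha
    have hay : f a y ∈ convexHull 𝕜 (f a '' t) := by
      rw [← (f a).image_convexHull]
      exact Set.mem_image_of_mem _ hy
    exact convexHull_mono (Set.image_subset_image2_right ha) hay
  exact convexHull_min hs ((convex_convexHull 𝕜 _).linear_preimage (f.flip y)) hx

section Caratheodory

variable {𝕜 E : Type*} [Field 𝕜] [LinearOrder 𝕜] [IsStrictOrderedRing 𝕜] [AddCommGroup E]
  [Module 𝕜 E]

theorem exists_fin_convexCombination_of_card_le {ι : Type*} [Fintype ι] {K : ℕ}
    (hK : Fintype.card ι ≤ K) (z : ι → E) {w : ι → 𝕜} (hw₀ : ∀ i, 0 ≤ w i)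
    (hw₁ : ∑ i, w i = 1) :
    ∃ (p : Fin K → 𝕜) (y : Fin K → E), (∀ i, 0 ≤ p i) ∧ ∑ i, p i = 1 ∧
      (∀ i, y i ∈ Set.range z) ∧ ∑ i, p i • y i = ∑ i, w i • z i := by
  obtain ⟨i₀⟩ : Nonempty ι := by
    by_contra h
    rw [not_nonempty_iff] at h
    simp at hw₁
  obtain ⟨e⟩ := Function.Embedding.nonempty_of_card_le (hK.trans_eq (Fintype.card_fin K).symm)
  refine ⟨Function.extend e w 0, Function.extend e z fun _ => z i₀, fun i => ?_, ?_,
    fun i => ?_, ?_⟩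
  · by_cases h : ∃ j, e j = i
    · obtain ⟨j, rfl⟩ := h
      rw [e.injective.extend_apply]
      exact hw₀ j
    · rw [Function.extend_apply' _ _ _ h, Pi.zero_apply]
  · rw [← hw₁]
    refine (Fintype.sum_of_injective e e.injective _ _ (fun i hi => ?_) fun j => ?_).symm
    · exact Function.extend_apply' _ _ _ hi
    · rw [e.injective.extend_apply]
  · by_cases h : ∃ j, e j = i
    · obtain ⟨j, rfl⟩ := h
      exact ⟨j, (e.injective.extend_apply _ _ _).symm⟩
    · exact ⟨i₀, (Function.extend_apply' z (fun _ => z i₀) i h).symm⟩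
  · refine (Fintype.sum_of_injective e e.injective _ _ (fun i hi => ?_) fun j => ?_).symm
    · rw [Function.extend_apply' _ _ _ hi, Pi.zero_apply, zero_smul]
    · rw [e.injective.extend_apply, e.injective.extend_apply]

theorem exists_fin_convexCombination_of_sub_mem [FiniteDimensional 𝕜 E] {s : Set E}
    {D : Submodule 𝕜 E} (hs : ∀ x ∈ s, ∀ y ∈ s, x - y ∈ D) {K : ℕ}
    (hK : finrank 𝕜 D + 1 ≤ K) {x : E} (hx : x ∈ convexHull 𝕜 s) :
    ∃ (p : Fin K → 𝕜) (y : Fin K → E), (∀ i, 0 ≤ p i) ∧ ∑ i, p i = 1 ∧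
      (∀ i, y i ∈ s) ∧ ∑ i, p i • y i = x := by
  obtain ⟨ι, _, z, w, hzs, hz, hw₀, hw₁, rfl⟩ := eq_pos_convex_span_of_mem_convexHull hx
  have hspan : vectorSpan 𝕜 (Set.range z) ≤ D := by
    rw [vectorSpan_def, Submodule.span_le]
    rintro _ ⟨a, ha, b, hb, rfl⟩
    exact hs a (hzs ha) b (hzs hb)
  have hcard : Fintype.card ι ≤ K :=
    hz.card_le_finrank_succ.trans (le_trans (by gcongr; exact Submodule.finrank_mono hspan) hK)
  obtain ⟨p, y, hp₀, hp₁, hy, hpy⟩ :=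
    exists_fin_convexCombination_of_card_le hcard z (fun i => (hw₀ i).le) hw₁
  exact ⟨p, y, hp₀, hp₁, fun i => hzs (hy i), hpy⟩

end Caratheodory

section States

variable {n : Type*} [Fintype n]

theorem IsDensityMatrix.nonempty {ρ : Matrix n n ℂ} (hρ : IsDensityMatrix ρ) : Nonempty n := by
  by_contra h
  rw [not_nonempty_iff] at h
  simpa [IsDensityMatrix, Matrix.trace] using hρ.2

theorem IsDensityMatrix.kronecker {m : Type*} [Fintype m] {σ : Matrix m m ℂ}
    {τ : Matrix n n ℂ} (hσ : IsDensityMatrix σ) (hτ : IsDensityMatrix τ) :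
    IsDensityMatrix (σ ⊗ₖ τ) :=
  ⟨hσ.1.kronecker hτ.1, by rw [trace_kronecker, hσ.2, hτ.2, one_mul]⟩

theorem trace_pureState (v : n → ℂ) : (pureState v).trace = ((∑ x, ‖v x‖ ^ 2 : ℝ) : ℂ) := by
  simp [pureState, trace_vecMulVec, dotProduct, Complex.mul_conj, Complex.normSq_eq_norm_sq]

theorem isDensityMatrix_pureState {v : n → ℂ} (hv : ∑ x, ‖v x‖ ^ 2 = 1) :
    IsDensityMatrix (pureState v) :=
  ⟨posSemidef_vecMulVec_self_star v, by rw [trace_pureState, hv, Complex.ofReal_one]⟩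

theorem Matrix.IsHermitian.eq_sum_eigenvalues_smul_pureState [DecidableEq n]
    {A : Matrix n n ℂ} (hA : A.IsHermitian) :
    A = ∑ i, (hA.eigenvalues i : ℂ) • pureState ⇑(hA.eigenvectorBasis i) := by
  conv_lhs => rw [hA.spectral_theorem]
  ext a b
  rw [Unitary.conjStarAlgAut_apply, mul_apply]
  simp only [mul_diagonal, Matrix.sum_apply, Matrix.smul_apply, pureState, vecMulVec_apply,
    Pi.star_apply, star_apply, Function.comp_apply, smul_eq_mul,
    IsHermitian.eigenvectorUnitary_apply]
  exact Finset.sum_congr rfl fun _ _ => (mul_right_comm _ _ _).trans (mul_comm _ _)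

def pureStates (n : Type*) [Fintype n] : Set (Matrix n n ℂ) :=
  pureState '' {v | ∑ x, ‖v x‖ ^ 2 = 1}

theorem IsDensityMatrix.mem_convexHull_pureStates [DecidableEq n] {σ : Matrix n n ℂ}
    (hσ : IsDensityMatrix σ) : σ ∈ convexHull ℝ (pureStates n) := by
  obtain ⟨hpsd, htr⟩ := hσ
  have hunit (i : n) : ∑ x, ‖hpsd.isHermitian.eigenvectorBasis i x‖ ^ 2 = 1 := by
    rw [← EuclideanSpace.norm_sq_eq, hpsd.isHermitian.eigenvectorBasis.orthonormal.1 i, one_pow]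
  have hsum : ∑ i, hpsd.isHermitian.eigenvalues i = 1 := by
    have := hpsd.isHermitian.trace_eq_sum_eigenvalues
    rwa [htr, ← RCLike.ofReal_sum, eq_comm, ← RCLike.ofReal_one, RCLike.ofReal_inj] at this
  rw [hpsd.isHermitian.eq_sum_eigenvalues_smul_pureState]
  simp_rw [Complex.coe_smul]
  exact (convex_convexHull ℝ _).sum_mem (fun i _ => hpsd.eigenvalues_nonneg i) hsum
    fun i _ => subset_convexHull ℝ _ ⟨_, hunit i, rfl⟩

def pureProductStates (m n : Type*) [Fintype m] [Fintype n] : Set (Matrix (m × n) (m × n) ℂ) :=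
  Set.image2 (· ⊗ₖ ·) (pureStates m) (pureStates n)

theorem IsDensityMatrix.of_mem_pureProductStates {m : Type*} [Fintype m]
    {ρ : Matrix (m × n) (m × n) ℂ} (hρ : ρ ∈ pureProductStates m n) : IsDensityMatrix ρ := by
  obtain ⟨_, ⟨a, ha, rfl⟩, _, ⟨b, hb, rfl⟩, rfl⟩ := hρ
  exact (isDensityMatrix_pureState ha).kronecker (isDensityMatrix_pureState hb)

theorem IsSeparableState.mem_convexHull_pureProductStates {M N : ℕ}
    {ρ : Matrix (Fin M × Fin N) (Fin M × Fin N) ℂ} (hρ : IsSeparableState ρ) :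
    ρ ∈ convexHull ℝ (pureProductStates (Fin M) (Fin N)) := by
  obtain ⟨k, p, σ, τ, hp₀, hp₁, hσ, hτ, rfl⟩ := hρ
  simp_rw [Complex.coe_smul]
  exact (convex_convexHull ℝ _).sum_mem (fun i _ => hp₀ i) hp₁ fun i _ =>
    (LinearMap.mk₂ ℝ (· ⊗ₖ ·) add_kronecker smul_kronecker kronecker_add
      kronecker_smul).mem_convexHull_image2 (hσ i).mem_convexHull_pureStates
      (hτ i).mem_convexHull_pureStates

end States

section Traceless

variable {n : Type*}

def reAddIm : Matrix n n ℂ →ₗ[ℝ] Matrix n n ℝ :=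
  Complex.reLm.mapMatrix + Complex.imLm.mapMatrix

-- `Re X` is symmetric and `Im X` antisymmetric, so both are recovered from the `(i, j)` and
-- `(j, i)` entries of `Re X + Im X`.
theorem reAddIm_injOn : Set.InjOn reAddIm {X : Matrix n n ℂ | IsSelfAdjoint X} := by
  intro X hX Y hY hXY
  rw [← sub_eq_zero]
  have hZ : IsSelfAdjoint (X - Y) := hX.sub hY
  have hZ0 : reAddIm (X - Y) = 0 := by rw [map_sub, hXY, sub_self]
  generalize X - Y = Z at hZ hZ0
  ext i j
  have hij := congrFun (congrFun hZ0 i) j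
  have hji := congrFun (congrFun hZ0 j) i
  have hconj : Z j i = star (Z i j) := congrFun (congrFun hZ.symm j) i
  simp only [reAddIm, LinearMap.add_apply, LinearMap.mapMatrix_apply, Matrix.add_apply, map_apply,
    Complex.reLm_coe, Complex.imLm_coe, Matrix.zero_apply, hconj, Complex.star_def,
    Complex.conj_re, Complex.conj_im] at hij hji
  apply Complex.ext <;> simp only [Matrix.zero_apply, Complex.zero_re, Complex.zero_im] <;>
    linarith

variable [Fintype n]

theorem trace_reAddIm (X : Matrix n n ℂ) : (reAddIm X).trace = X.trace.re + X.trace.im := by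
  simp [reAddIm, Matrix.trace, Finset.sum_add_distrib]

def tracelessHermitian (n : Type*) [Fintype n] : Submodule ℝ (Matrix n n ℂ) :=
  selfAdjoint.submodule ℝ (Matrix n n ℂ) ⊓ LinearMap.ker (traceLinearMap n ℝ ℂ)

theorem IsDensityMatrix.sub_mem_tracelessHermitian {σ τ : Matrix n n ℂ}
    (hσ : IsDensityMatrix σ) (hτ : IsDensityMatrix τ) : σ - τ ∈ tracelessHermitian n :=
  ⟨(hσ.1.isHermitian.sub hτ.1.isHermitian).isSelfAdjoint, by
    simp [traceLinearMap_apply, trace_sub, hσ.2, hτ.2]⟩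

theorem finrank_tracelessHermitian_lt [Nonempty n] :
    finrank ℝ (tracelessHermitian n) < Fintype.card n ^ 2 := by
  let tr := traceLinearMap n ℝ ℝ
  let f : tracelessHermitian n →ₗ[ℝ] LinearMap.ker tr :=
    (reAddIm.domRestrict _).codRestrict _ fun X => by
      simp [tr, trace_reAddIm, show X.1.trace = 0 from X.2.2]
  have hf : Function.Injective f := fun X Y hXY =>
    Subtype.ext (reAddIm_injOn X.2.1 Y.2.1 (congrArg Subtype.val hXY))
  have hker : LinearMap.ker tr ≠ ⊤ := by
    classical
    intro h
    have : (1 : Matrix n n ℝ) ∈ LinearMap.ker tr := h ▸ Submodule.mem_top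
    simp [tr] at this
  calc finrank ℝ (tracelessHermitian n) ≤ finrank ℝ (LinearMap.ker tr) :=
        LinearMap.finrank_le_finrank_of_injective hf
    _ < finrank ℝ (Matrix n n ℝ) := Submodule.finrank_lt hker
    _ = Fintype.card n ^ 2 := by simp [sq, Module.finrank_matrix]

end Traceless

theorem separable_caratheodory_bound_general {M N : ℕ}
    (ρ : Matrix (Fin M × Fin N) (Fin M × Fin N) ℂ)
    (hsep : IsSeparableState ρ) :
    ∃ (p : Fin (M ^ 2 * N ^ 2) → ℝ)
      (α : Fin (M ^ 2 * N ^ 2) → (Fin M → ℂ))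
      (β : Fin (M ^ 2 * N ^ 2) → (Fin N → ℂ)),
      (∀ i, 0 ≤ p i) ∧ (∑ i, p i = 1) ∧
      (∀ i, ∑ x, ‖α i x‖ ^ 2 = 1) ∧ (∀ i, ∑ y, ‖β i y‖ ^ 2 = 1) ∧
      ρ = ∑ i, (p i : ℂ) • (pureState (α i) ⊗ₖ pureState (β i)) := by
  have hρ := hsep.mem_convexHull_pureProductStates
  have hstates {X} (hX : X ∈ pureProductStates (Fin M) (Fin N)) : IsDensityMatrix X :=
    IsDensityMatrix.of_mem_pureProductStates hX
  obtain ⟨X, hX⟩ := convexHull_nonempty_iff.mp ⟨ρ, hρ⟩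
  have : Nonempty (Fin M × Fin N) := (hstates hX).nonempty
  have hK : finrank ℝ (tracelessHermitian (Fin M × Fin N)) + 1 ≤ M ^ 2 * N ^ 2 := by
    have := finrank_tracelessHermitian_lt (n := Fin M × Fin N)
    rw [Fintype.card_prod, Fintype.card_fin, Fintype.card_fin, mul_pow] at this
    omega
  obtain ⟨p, z, hp₀, hp₁, hz, rfl⟩ := exists_fin_convexCombination_of_sub_mem
    (fun X hX Y hY => (hstates hX).sub_mem_tracelessHermitian (hstates hY)) hK hρ
  simp only [pureProductStates, pureStates, Set.image2_image_left, Set.image2_image_right,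
    Set.mem_image2, Set.mem_ofPred_eq] at hz
  choose α hα β hβ hαβ using hz
  refine ⟨p, α, β, hp₀, hp₁, hα, hβ, ?_⟩
  simp only [hαβ, Complex.coe_smul]

/-- every separable density matrix on ℂ^M ⊗ ℂ^N is a convex combination
of at most M²N² pure product states (Carathéodory bound). -/
theorem separable_caratheodory_bound {M N : ℕ}
    (ρ : Matrix (Fin M × Fin N) (Fin M × Fin N) ℂ)
    (hρ : IsDensityMatrix ρ) (hsep : IsSeparableState ρ) :
    ∃ (p : Fin (M ^ 2 * N ^ 2) → ℝ)
      (α : Fin (M ^ 2 * N ^ 2) → (Fin M → ℂ))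
      (β : Fin (M ^ 2 * N ^ 2) → (Fin N → ℂ)),
      (∀ i, 0 ≤ p i) ∧ (∑ i, p i = 1) ∧
      (∀ i, ∑ x, ‖α i x‖ ^ 2 = 1) ∧ (∀ i, ∑ y, ‖β i y‖ ^ 2 = 1) ∧
      ρ = ∑ i, (p i : ℂ) • (pureState (α i) ⊗ₖ pureState (β i)) :=
  separable_caratheodory_bound_general ρ hsep
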